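/- Let t be a real number with 0 < t ≤ 1 and let m be a natural number. Then Σ_{k=0}^{m} max(1, 2^k · t) ≤ log₂(1/t) + 1 + 2^{m+1} · t. -/

import Mathlib

/-! Split each term as `max 1 x ≤ [x ≤ 1] + x`. The indicator terms count the levels `k` with
`2 ^ k ≤ 1 / t`, of which there are at most `log₂ (1 / t) + 1`; the remaining terms form a geometric
series bounded by its next term `2 ^ (m + 1) * t`. -/

open Finset Real

lemma max_one_le_ite_add {x : ℝ} (hx : 0 ≤ x) : max 1 x ≤ (if x ≤ 1 then 1 else 0) + x := by
  split_ifs with h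
  · rw [max_eq_left h]; linarith
  · rw [max_eq_right (le_of_not_ge h)]; simp

lemma card_filter_pow_le_le_logb_add_one {b x : ℝ} (hb : 1 < b) (hx : 1 ≤ x) (n : ℕ) :
    (#{k ∈ range n | b ^ k ≤ x} : ℝ) ≤ logb b x + 1 := by
  have hsub : {k ∈ range n | b ^ k ≤ x} ⊆ range (⌊logb b x⌋₊ + 1) := by
    intro k hk
    have hk_le : (k : ℝ) ≤ logb b x := by
      rw [le_logb_iff_rpow_le hb (by linarith), rpow_natCast]
      exact (mem_filter.mp hk).2
    exact mem_range.mpr (Nat.lt_succ_of_le (Nat.le_floor hk_le))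
  calc (#{k ∈ range n | b ^ k ≤ x} : ℝ) ≤ (⌊logb b x⌋₊ + 1 : ℕ) := by
        exact_mod_cast (card_le_card hsub).trans (card_range _).le
    _ ≤ logb b x + 1 := by
        push_cast
        gcongr
        exact Nat.floor_le (logb_nonneg hb hx)

lemma sum_range_two_pow_le (n : ℕ) : ∑ k ∈ range n, (2 : ℝ) ^ k ≤ 2 ^ n := by
  have h := geom_sum_mul_of_one_le (one_le_two (α := ℝ)) n
  rw [show (2 : ℝ) - 1 = 1 by norm_num, mul_one] at h
  linarith

/-- **Character-queue cost sum** (arithmetic core of Lemma 10 of the paper).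
For `0 < t ≤ 1` and any `m`, `∑_{k=0}^m max(1, 2^k t) ≤ log₂(1/t) + 1 + 2^(m+1) t`. -/
theorem character_queue_cost_sum (t : ℝ) (ht0 : 0 < t) (ht1 : t ≤ 1) (m : ℕ) :
    ∑ k ∈ Finset.range (m + 1), max 1 ((2 : ℝ) ^ k * t) ≤
      Real.logb 2 (1 / t) + 1 + 2 ^ (m + 1) * t := by
  have hlevels :
      {k ∈ range (m + 1) | (2 : ℝ) ^ k * t ≤ 1} = {k ∈ range (m + 1) | (2 : ℝ) ^ k ≤ 1 / t} :=
    filter_congr fun k _ ↦ (le_div_iff₀ ht0).symm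
  calc ∑ k ∈ range (m + 1), max 1 ((2 : ℝ) ^ k * t)
      ≤ ∑ k ∈ range (m + 1), ((if (2 : ℝ) ^ k * t ≤ 1 then 1 else 0) + 2 ^ k * t) :=
        sum_le_sum fun k _ ↦ max_one_le_ite_add (by positivity)
    _ = #{k ∈ range (m + 1) | (2 : ℝ) ^ k ≤ 1 / t} +
          (∑ k ∈ range (m + 1), (2 : ℝ) ^ k) * t := by
        rw [sum_add_distrib, sum_boole, hlevels, sum_mul]
    _ ≤ logb 2 (1 / t) + 1 + 2 ^ (m + 1) * t := by
        gcongr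
        · exact card_filter_pow_le_le_logb_add_one one_lt_two (one_le_one_div ht0 ht1) _
        · exact sum_range_two_pow_le _
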